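/- arXiv:2406.05619 — 3 statements merged into one kernel-verified Lean document; each statement's English description precedes it below -/
import Mathlib

section
/- For bit strings 𝐳₁,𝐳₂ ∈ {0,1}ⁿ let σ_{𝐳₁,𝐳₂} := ⊗ᵢ σ_{z₁ᵢ,z₂ᵢ} be the n-qubit Pauli matrix, where σ_{0,0}=I, σ_{1,0}=σ_X, σ_{0,1}=σ_Z, σ_{1,1}=σ_Y=iσ_Xσ_Z. Then for every 2ⁿ×2ⁿ complex matrix ρ, the transpose admits the decomposition ρᵀ = 2^{−n} Σ_{𝐳₁,𝐳₂ ∈ {0,1}ⁿ} (−1)^{𝐳₁·𝐳₂} σ_{𝐳₁,𝐳₂} ρ σ_{𝐳₁,𝐳₂}, where 𝐳₁·𝐳₂ = Σᵢ z₁ᵢ z₂ᵢ. -/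
open Matrix
open scoped Kronecker

/-- The single-qubit Pauli matrices `σ_{z₁,z₂}` (`σ_{0,0} = I`, `σ_{1,0} = σ_X`,
`σ_{0,1} = σ_Z`, `σ_{1,1} = σ_Y = i σ_X σ_Z`), with the qubit basis indexed by `Bool`
(`false = |0⟩`, `true = |1⟩`). -/
def pauli1 : Bool → Bool → Matrix Bool Bool ℂ
  | false, false => fun x y => if x = y then 1 else 0
  | true,  false => fun x y => if x ≠ y then 1 else 0
  | false, true  => fun x y => if x = y then (if x then -1 else 1) else 0
  | true,  true  => fun x y => if x ≠ y then (if x then Complex.I else -Complex.I) else 0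

/-- The `n`-qubit Pauli matrix `σ_{𝐳₁,𝐳₂} = ⊗ᵢ σ_{z₁ᵢ,z₂ᵢ}` acting on
`ℂ^{2ⁿ} = (Fin n → Bool) → ℂ` (entrywise Kronecker product). -/
def pauliN (n : ℕ) (z₁ z₂ : Fin n → Bool) : Matrix (Fin n → Bool) (Fin n → Bool) ℂ :=
  fun x y => ∏ i, pauli1 (z₁ i) (z₂ i) (x i) (y i)

/-- `𝐳₁ · 𝐳₂ = ∑ᵢ z₁ᵢ z₂ᵢ`. -/
def dotB {n : ℕ} (z₁ z₂ : Fin n → Bool) : ℕ :=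
  (Finset.univ.filter fun i => z₁ i && z₂ i).card

/-- The unnormalized maximally entangled vector `|Ψ⁺⟩ = ∑ᵢ eᵢ ⊗ eᵢ`. -/
def psiPlus (n : ℕ) : (Fin n → Bool) × (Fin n → Bool) → ℂ :=
  fun p => if p.1 = p.2 then 1 else 0

/-- The normalized `n`-qubit Bell states `|Ψ_{𝐳₁,𝐳₂}⟩ = 2^{-n/2} (σ_{𝐳₁,𝐳₂} ⊗ I)|Ψ⁺⟩`. -/
noncomputable def bell (n : ℕ) (z₁ z₂ : Fin n → Bool) :
    (Fin n → Bool) × (Fin n → Bool) → ℂ :=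
  ((Real.sqrt (2 ^ n) : ℂ))⁻¹ •
    (pauliN n z₁ z₂ ⊗ₖ (1 : Matrix (Fin n → Bool) (Fin n → Bool) ℂ)).mulVec (psiPlus n)

/-- The swap operator `S` on `ℂ^d ⊗ ℂ^d`, `S[(i,j),(k,l)] = δ_{il} δ_{jk}`. -/
def swapOp (α : Type*) [DecidableEq α] : Matrix (α × α) (α × α) ℂ :=
  fun p q => if p.1 = q.2 ∧ p.2 = q.1 then 1 else 0

/-!
Bit strings form a Boolean ring, `+` being pointwise xor. In this notation `σ_{z₁,z₂}` is the
signed permutation matrix `x ↦ z₁ + x` with entry `i^{z₁·z₂} (-1)^{z₂·y}` at `(x, y)`, so the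
`(x, y)` entry of `σ ρ σ` is `(-1)^{z₁·z₂} (-1)^{z₂·(z₁+x)} (-1)^{z₂·y} ρ(z₁ + x, z₁ + y)`.
The sign `(-1)^{z₁·z₂}` of the twirl cancels the first factor, and summing the characters
`z₂ ↦ (-1)^{z₂·(z₁+x)} (-1)^{z₂·y}` gives `2ⁿ` if `z₁ = x + y` and `0` otherwise, which leaves
`2ⁿ ρ(y, x)`.
-/

open Finset

instance Pi.instBooleanRing {ι : Type*} {α : ι → Type*} [∀ i, BooleanRing (α i)] :
    BooleanRing (∀ i, α i) where
  isIdempotentElem f := funext fun i => BooleanRing.isIdempotentElem (f i)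

lemma Finset.prod_ite_eq_pow_card_filter {ι M : Type*} [CommMonoid M] (s : Finset ι)
    (p : ι → Prop) [DecidablePred p] (c : M) :
    ∏ i ∈ s, (if p i then c else 1) = c ^ #(s.filter p) := by
  simp [prod_ite]

lemma pow_dotB {M : Type*} [CommMonoid M] {n : ℕ} (c : M) (z u : Fin n → Bool) :
    c ^ dotB z u = ∏ i, if z i && u i then c else 1 :=
  (prod_ite_eq_pow_card_filter _ _ _).symm

lemma sum_neg_one_pow_dotB_mul {R : Type*} [CommRing R] {n : ℕ} (u v : Fin n → Bool) :
    ∑ z : Fin n → Bool, (-1 : R) ^ dotB z u * (-1) ^ dotB z v = if u = v then 2 ^ n else 0 := by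
  have sum_bool (i : Fin n) : ∑ b : Bool, (if b && u i then (-1 : R) else 1) *
      (if b && v i then -1 else 1) = if u i = v i then 2 else 0 := by
    cases u i <;> cases v i <;> simp [one_add_one_eq_two]
  simp only [pow_dotB, ← prod_mul_distrib]
  rw [← Fintype.prod_sum fun i b =>
    (if b && u i then (-1 : R) else 1) * (if b && v i then -1 else 1)]
  simp only [sum_bool, prod_ite_zero, prod_const, card_univ, Fintype.card_fin, funext_iff,
    mem_univ, true_imp_iff]

lemma pauli1_apply (z₁ z₂ x y : Bool) :
    pauli1 z₁ z₂ x y = if y = z₁ + x then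
      (if z₁ && z₂ then Complex.I else 1) * (if z₂ && y then -1 else 1) else 0 := by
  cases z₁ <;> cases z₂ <;> cases x <;> cases y <;> simp [pauli1] <;> rfl

lemma pauliN_apply {n : ℕ} (z₁ z₂ x y : Fin n → Bool) :
    pauliN n z₁ z₂ x y =
      if y = z₁ + x then Complex.I ^ dotB z₁ z₂ * (-1) ^ dotB z₂ y else 0 := by
  simp only [pauliN, pauli1_apply, prod_ite_zero, prod_mul_distrib, prod_ite_eq_pow_card_filter,
    funext_iff, Pi.add_apply, mem_univ, true_imp_iff]
  rfl

lemma pauliN_mul_mul_pauliN_apply {n : ℕ} (z₁ z₂ : Fin n → Bool)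
    (ρ : Matrix (Fin n → Bool) (Fin n → Bool) ℂ) (x y : Fin n → Bool) :
    (pauliN n z₁ z₂ * ρ * pauliN n z₁ z₂) x y =
      (-1) ^ dotB z₁ z₂ * (-1) ^ dotB z₂ (z₁ + x) * (-1) ^ dotB z₂ y * ρ (z₁ + x) (z₁ + y) := by
  simp only [mul_apply, pauliN_apply, ite_mul, zero_mul, sum_ite_eq', mem_univ, if_true]
  simp only [← sub_eq_iff_eq_add', BooleanRing.sub_eq_add, mul_ite, mul_zero, sum_ite_eq,
    mem_univ, if_true]
  rw [add_comm y z₁, ← Complex.I_mul_I, mul_pow]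
  ring

/-- **Pauli-twirl decomposition of the transpose.**
`ρᵀ = 2^{-n} ∑_{𝐳₁,𝐳₂} (-1)^{𝐳₁·𝐳₂} σ_{𝐳₁,𝐳₂} ρ σ_{𝐳₁,𝐳₂}`. -/
theorem transpose_eq_pauli_twirl (n : ℕ) (ρ : Matrix (Fin n → Bool) (Fin n → Bool) ℂ) :
    ρᵀ = ((2 : ℂ) ^ n)⁻¹ •
      ∑ z₁ : Fin n → Bool, ∑ z₂ : Fin n → Bool,
        ((-1 : ℂ) ^ dotB z₁ z₂) • (pauliN n z₁ z₂ * ρ * pauliN n z₁ z₂) := by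
  have sign_mul_self (k : ℕ) : (-1 : ℂ) ^ k * (-1) ^ k = 1 := by rw [← mul_pow]; norm_num
  ext x y
  simp only [transpose_apply, Matrix.smul_apply, Matrix.sum_apply, smul_eq_mul,
    pauliN_mul_mul_pauliN_apply, ← mul_assoc, sign_mul_self, one_mul, ← sum_mul,
    sum_neg_one_pow_dotB_mul]
  simp only [← eq_sub_iff_add_eq, BooleanRing.sub_eq_add, ite_mul, zero_mul, sum_ite_eq',
    mem_univ, if_true]
  rw [inv_mul_cancel_left₀ (pow_ne_zero n two_ne_zero), add_assoc, BooleanRing.add_self,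
    add_zero, add_comm y x, add_assoc, BooleanRing.add_self, add_zero]
end

section
/- Let |Ψ_{𝐳₁,𝐳₂}⟩ := 2^{−n/2} (σ_{𝐳₁,𝐳₂} ⊗ I)|Ψ⁺⟩ be the normalized n-qubit Bell states and, for a 2ⁿ×2ⁿ complex matrix ρ, set p(𝐳₁,𝐳₂) := ⟨Ψ_{𝐳₁,𝐳₂}|(ρ⊗ρ)|Ψ_{𝐳₁,𝐳₂}⟩. Then the purity of ρ is recovered from the Bell-measurement statistics on two copies of ρ by Tr[ρ²] = Σ_{𝐳₁,𝐳₂ ∈ {0,1}ⁿ} (−1)^{𝐳₁·𝐳₂} p(𝐳₁,𝐳₂), where 𝐳₁·𝐳₂ = Σᵢ z₁ᵢ z₂ᵢ. -/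
open Matrix
open scoped Kronecker

set_option maxHeartbeats 1600000

lemma pauli1_key (a b a' b' : Bool) :
    ∑ u : Bool, ∑ v : Bool, ((-1:ℂ) ^ (if u && v then 1 else 0)) *
      ((starRingEnd ℂ) (pauli1 u v a b) * pauli1 u v a' b')
    = if a = b' ∧ b = a' then 2 else 0 := by
  cases a <;> cases b <;> cases a' <;> cases b' <;>
    simp [Fintype.sum_bool, pauli1, Complex.ext_iff] <;> norm_num

lemma pauliN_key (n : ℕ) (a b a' b' : Fin n → Bool) :
    ∑ z₁ : Fin n → Bool, ∑ z₂ : Fin n → Bool, ((-1:ℂ) ^ (dotB z₁ z₂)) *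
      ((starRingEnd ℂ) (pauliN n z₁ z₂ a b) * pauliN n z₁ z₂ a' b')
    = if a = b' ∧ b = a' then (2:ℂ)^n else 0 := by
  have hterm : ∀ z₁ z₂ : Fin n → Bool,
      ((-1:ℂ) ^ (dotB z₁ z₂)) *
        ((starRingEnd ℂ) (pauliN n z₁ z₂ a b) * pauliN n z₁ z₂ a' b')
      = ∏ i, (((-1:ℂ) ^ (if z₁ i && z₂ i then 1 else 0)) *
          ((starRingEnd ℂ) (pauli1 (z₁ i) (z₂ i) (a i) (b i)) *
            pauli1 (z₁ i) (z₂ i) (a' i) (b' i))) := by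
    intro z₁ z₂
    rw [Finset.prod_mul_distrib, Finset.prod_mul_distrib, ← map_prod,
      dotB, Finset.card_filter, ← Finset.prod_pow_eq_pow_sum]
    rfl
  simp only [hterm]
  set g : Fin n → Bool × Bool → ℂ := fun i p =>
    ((-1:ℂ) ^ (if p.1 && p.2 then 1 else 0)) *
      ((starRingEnd ℂ) (pauli1 p.1 p.2 (a i) (b i)) * pauli1 p.1 p.2 (a' i) (b' i)) with hg
  have step1 : (∑ z₁ : Fin n → Bool, ∑ z₂ : Fin n → Bool, ∏ i, g i (z₁ i, z₂ i))
      = ∑ zp : (Fin n → Bool) × (Fin n → Bool), ∏ i, g i (zp.1 i, zp.2 i) :=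
    (Fintype.sum_prod_type
      (f := fun zp : (Fin n → Bool) × (Fin n → Bool) => ∏ i, g i (zp.1 i, zp.2 i))).symm
  have step2 : (∑ w : Fin n → Bool × Bool, ∏ i, g i (w i))
      = ∑ zp : (Fin n → Bool) × (Fin n → Bool), ∏ i, g i (zp.1 i, zp.2 i) :=
    Fintype.sum_equiv (Equiv.arrowProdEquivProdArrow (Fin n) (fun _ => Bool) (fun _ => Bool)) (fun w => ∏ i, g i (w i)) (fun zp => ∏ i, g i (zp.1 i, zp.2 i))
      (fun w => by simp [Equiv.arrowProdEquivProdArrow])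
  have step3 : (∑ w : Fin n → Bool × Bool, ∏ i, g i (w i))
      = ∏ i, ∑ p : Bool × Bool, g i p := (Fintype.prod_sum g).symm
  have step4 : ∀ i, (∑ p : Bool × Bool, g i p)
      = if a i = b' i ∧ b i = a' i then (2:ℂ) else 0 := fun i =>
    (Fintype.sum_prod_type (f := g i)).trans (pauli1_key (a i) (b i) (a' i) (b' i))
  calc ∑ z₁ : Fin n → Bool, ∑ z₂ : Fin n → Bool, ∏ i, g i (z₁ i, z₂ i)
      = ∏ i, ∑ p : Bool × Bool, g i p := by rw [step1, ← step2, step3]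
    _ = ∏ i, (if a i = b' i ∧ b i = a' i then (2:ℂ) else 0) :=
        Finset.prod_congr rfl fun i _ => step4 i
    _ = if a = b' ∧ b = a' then (2:ℂ)^n else 0 := by
        by_cases h : a = b' ∧ b = a'
        · rw [if_pos h,
            Finset.prod_congr rfl (fun i _ => if_pos ⟨congrFun h.1 i, congrFun h.2 i⟩)]
          simp
        · rw [if_neg h]
          rw [Decidable.not_and_iff_or_not] at h
          have : ∃ i, ¬(a i = b' i ∧ b i = a' i) := by
            rcases h with h | h
            · obtain ⟨i, hi⟩ := Function.ne_iff.mp h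
              exact ⟨i, fun hc => hi hc.1⟩
            · obtain ⟨i, hi⟩ := Function.ne_iff.mp h
              exact ⟨i, fun hc => hi hc.2⟩
          obtain ⟨i, hi⟩ := this
          exact Finset.prod_eq_zero (Finset.mem_univ i) (if_neg hi)

lemma bell_apply (n : ℕ) (z₁ z₂ : Fin n → Bool) (p : (Fin n → Bool) × (Fin n → Bool)) :
    bell n z₁ z₂ p = ((Real.sqrt (2 ^ n) : ℂ))⁻¹ * pauliN n z₁ z₂ p.1 p.2 := by
  obtain ⟨x, y⟩ := p
  simp only [bell, Pi.smul_apply, smul_eq_mul, mulVec, dotProduct, psiPlus,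
    kroneckerMap_apply, Matrix.one_apply, Fintype.sum_prod_type]
  congr 1
  simp [mul_ite, ite_mul, Finset.sum_ite_eq, Finset.sum_ite_eq']

lemma sum_comm4 {α β : Type*} [Fintype α] [Fintype β] (f : α → α → β → β → ℂ) :
    ∑ z₁ : α, ∑ z₂ : α, ∑ p : β, ∑ q : β, f z₁ z₂ p q
      = ∑ p : β, ∑ q : β, ∑ z₁ : α, ∑ z₂ : α, f z₁ z₂ p q := by
  have h1 : ∀ z₁ : α, ∑ z₂ : α, ∑ p : β, ∑ q : β, f z₁ z₂ p q
      = ∑ p : β, ∑ z₂ : α, ∑ q : β, f z₁ z₂ p q := fun z₁ => Finset.sum_comm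
  simp only [h1]
  rw [Finset.sum_comm]
  have h2 : ∀ p : β, ∀ z₁ : α, ∑ z₂ : α, ∑ q : β, f z₁ z₂ p q
      = ∑ q : β, ∑ z₂ : α, f z₁ z₂ p q := fun p z₁ => Finset.sum_comm
  simp only [h2]
  have h3 : ∀ p : β, ∑ z₁ : α, ∑ q : β, ∑ z₂ : α, f z₁ z₂ p q
      = ∑ q : β, ∑ z₁ : α, ∑ z₂ : α, f z₁ z₂ p q := fun p => Finset.sum_comm
  simp only [h3]

lemma inner_expand (n : ℕ) (ρ : Matrix (Fin n → Bool) (Fin n → Bool) ℂ)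
    (z₁ z₂ : Fin n → Bool) :
    star (bell n z₁ z₂) ⬝ᵥ ((ρ ⊗ₖ ρ).mulVec (bell n z₁ z₂))
      = ∑ p : (Fin n → Bool) × (Fin n → Bool), ∑ q : (Fin n → Bool) × (Fin n → Bool),
          (((2:ℂ)^n)⁻¹ *
            ((starRingEnd ℂ) (pauliN n z₁ z₂ p.1 p.2) * pauliN n z₁ z₂ q.1 q.2)) *
            (ρ p.1 q.1 * ρ p.2 q.2) := by
  have hc : ((Real.sqrt (2 ^ n) : ℂ))⁻¹ * ((Real.sqrt (2 ^ n) : ℂ))⁻¹ = ((2:ℂ)^n)⁻¹ := by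
    have h : ((Real.sqrt (2 ^ n) : ℂ)) * ((Real.sqrt (2 ^ n) : ℂ)) = ((2:ℂ)^n) := by
      rw [← Complex.ofReal_mul, Real.mul_self_sqrt (by positivity)]
      push_cast
      ring
    rw [← mul_inv, h]
  simp only [dotProduct, mulVec, Pi.star_apply, Complex.star_def, Finset.mul_sum]
  refine Finset.sum_congr rfl fun p _ => Finset.sum_congr rfl fun q _ => ?_
  rw [bell_apply, bell_apply, _root_.map_mul, map_inv₀, Complex.conj_ofReal, kroneckerMap_apply,
    ← hc]
  ring

/-- **Purity from Bell-measurement statistics on two copies.**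
`Tr[ρ²] = ∑_{𝐳₁,𝐳₂} (-1)^{𝐳₁·𝐳₂} p(𝐳₁,𝐳₂)` where
`p(𝐳₁,𝐳₂) = ⟨Ψ_{𝐳₁,𝐳₂}|(ρ⊗ρ)|Ψ_{𝐳₁,𝐳₂}⟩`. -/
theorem purity_from_bell_statistics (n : ℕ) (ρ : Matrix (Fin n → Bool) (Fin n → Bool) ℂ) :
    (ρ ^ 2).trace
      = ∑ z₁ : Fin n → Bool, ∑ z₂ : Fin n → Bool,
          ((-1 : ℂ) ^ dotB z₁ z₂) *
            (star (bell n z₁ z₂) ⬝ᵥ ((ρ ⊗ₖ ρ).mulVec (bell n z₁ z₂))) := by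
  simp only [inner_expand, Finset.mul_sum]
  rw [sum_comm4 (β := (Fin n → Bool) × (Fin n → Bool)) (f := fun z₁ z₂ p q => ((-1 : ℂ) ^ dotB z₁ z₂) *
    ((((2:ℂ)^n)⁻¹ * ((starRingEnd ℂ) (pauliN n z₁ z₂ p.1 p.2) * pauliN n z₁ z₂ q.1 q.2)) *
      (ρ p.1 q.1 * ρ p.2 q.2)))]
  have hz : ∀ p q : (Fin n → Bool) × (Fin n → Bool),
      (∑ z₁ : Fin n → Bool, ∑ z₂ : Fin n → Bool, ((-1 : ℂ) ^ dotB z₁ z₂) *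
        ((((2:ℂ)^n)⁻¹ * ((starRingEnd ℂ) (pauliN n z₁ z₂ p.1 p.2) * pauliN n z₁ z₂ q.1 q.2)) *
          (ρ p.1 q.1 * ρ p.2 q.2)))
      = (if p.1 = q.2 ∧ p.2 = q.1 then 1 else 0) * (ρ p.1 q.1 * ρ p.2 q.2) := by
    intro p q
    have h2n : ((2:ℂ)^n) ≠ 0 := pow_ne_zero n two_ne_zero
    calc (∑ z₁ : Fin n → Bool, ∑ z₂ : Fin n → Bool, ((-1 : ℂ) ^ dotB z₁ z₂) *
        ((((2:ℂ)^n)⁻¹ * ((starRingEnd ℂ) (pauliN n z₁ z₂ p.1 p.2) * pauliN n z₁ z₂ q.1 q.2)) *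
          (ρ p.1 q.1 * ρ p.2 q.2)))
        = (((2:ℂ)^n)⁻¹ * (ρ p.1 q.1 * ρ p.2 q.2)) *
            ∑ z₁ : Fin n → Bool, ∑ z₂ : Fin n → Bool, ((-1 : ℂ) ^ dotB z₁ z₂) *
              ((starRingEnd ℂ) (pauliN n z₁ z₂ p.1 p.2) * pauliN n z₁ z₂ q.1 q.2) := by
          rw [Finset.mul_sum]
          refine Finset.sum_congr rfl fun z₁ _ => ?_
          rw [Finset.mul_sum]
          exact Finset.sum_congr rfl fun z₂ _ => by ring
      _ = (if p.1 = q.2 ∧ p.2 = q.1 then 1 else 0) * (ρ p.1 q.1 * ρ p.2 q.2) := by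
          rw [pauliN_key]
          by_cases h : p.1 = q.2 ∧ p.2 = q.1
          · rw [if_pos h, if_pos h]
            field_simp
          · rw [if_neg h, if_neg h]
            ring
  simp only [hz]
  simp only [Fintype.sum_prod_type]
  have htr : (ρ ^ 2).trace = ∑ a, ∑ c, ρ a c * ρ c a := by
    simp [Matrix.trace, pow_two, Matrix.mul_apply, Matrix.diag]
  rw [htr]
  simp only [ite_and, ite_mul, one_mul, zero_mul]
  rw [Finset.sum_comm]
  refine Finset.sum_congr rfl fun a _ => ?_
  simp [Finset.sum_ite_eq, Finset.sum_ite_eq']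
  exact Finset.sum_congr rfl fun x _ => mul_comm _ _
end

section
/- Let d_A, d_B ≥ 1 and let U be a complex matrix on ℂ^{d_A}⊗ℂ^{d_B} (indexed by pairs (a,b)). Suppose U admits an operator-Schmidt decomposition U[(a,b),(a',b')] = Σ_k √(p_k) · ξ_k(a,a') · φ_k(b,b'), where k ranges over a finite index set, p_k ≥ 0, and (ξ_k) and (φ_k) are orthonormal families in ℂ^{d_A×d_A} and ℂ^{d_B×d_B} respectively (with respect to the standard Hermitian inner products). Then for all unitaries U_A on ℂ^{d_A} and U_B on ℂ^{d_B}, |Tr[(U_A⊗U_B)† U]|² ≤ d_A·d_B·max_k p_k. -/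
open Matrix
open scoped Kronecker

lemma unit_sum {d : ℕ} (W : Matrix.unitaryGroup (Fin d) ℂ) :
    ∑ a, ∑ a', (starRingEnd ℂ) (W.1 a a') * W.1 a a' = (d : ℂ) := by
  rw [Finset.sum_comm]
  have h : W.1ᴴ * W.1 = 1 := by
    have := W.2.1
    simpa [Matrix.star_eq_conjTranspose] using this
  have : ∀ a', ∑ a, (starRingEnd ℂ) (W.1 a a') * W.1 a a' = (W.1ᴴ * W.1) a' a' := by
    intro a'
    simp [Matrix.mul_apply, Matrix.conjTranspose_apply]
  simp only [this, h]
  simp [Matrix.one_apply]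

lemma bessel_aux {d : ℕ} {ι : Type} [Fintype ι] [DecidableEq ι]
    (ξ : ι → Matrix (Fin d) (Fin d) ℂ)
    (hξ : ∀ k l, (∑ a, ∑ a', (starRingEnd ℂ) (ξ k a a') * ξ l a a')
      = if k = l then 1 else 0)
    (W : Matrix.unitaryGroup (Fin d) ℂ) :
    ∑ k, ‖∑ a, ∑ a', (starRingEnd ℂ) (W.1 a a') * ξ k a a'‖ ^ 2 ≤ (d : ℝ) := by
  classical
  let v : ι → EuclideanSpace ℂ (Fin d × Fin d) := fun k => WithLp.toLp 2 (fun q : Fin d × Fin d => ξ k q.1 q.2)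
  let w : EuclideanSpace ℂ (Fin d × Fin d) := WithLp.toLp 2 (fun q : Fin d × Fin d => W.1 q.1 q.2)
  have hinner : ∀ (x y : EuclideanSpace ℂ (Fin d × Fin d)),
      inner ℂ x y = ∑ q : Fin d × Fin d, (starRingEnd ℂ) (x q) * y q := by
    intro x y
    rw [PiLp.inner_apply]
    simp [RCLike.inner_apply, mul_comm]
  have hv : Orthonormal ℂ v := by
    rw [orthonormal_iff_ite]
    intro k l
    rw [hinner]
    simpa [Fintype.sum_prod_type] using hξ k l
  have hb := hv.sum_inner_products_le (s := Finset.univ) w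
  have hwn : ‖w‖ ^ 2 = (d : ℝ) := by
    have h1 : inner ℂ w w = (d : ℂ) := by
      rw [hinner]
      simpa [Fintype.sum_prod_type] using unit_sum W
    have h2 := @inner_self_eq_norm_sq ℂ (EuclideanSpace ℂ (Fin d × Fin d)) _ _ _ w
    rw [← h2, h1]
    simp
  calc ∑ k, ‖∑ a, ∑ a', (starRingEnd ℂ) (W.1 a a') * ξ k a a'‖ ^ 2
      = ∑ k, ‖inner ℂ (v k) w‖ ^ 2 := by
        apply Finset.sum_congr rfl
        intro k _
        rw [hinner]
        rw [← Complex.norm_conj]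
        congr 1
        simp [v, w, map_sum, _root_.map_mul, Fintype.sum_prod_type, mul_comm]
    _ ≤ ‖w‖ ^ 2 := hb
    _ = (d : ℝ) := hwn

lemma kron_conjT {m n p q : Type*} (A : Matrix m n ℂ) (B : Matrix p q ℂ) :
    (A ⊗ₖ B)ᴴ = Aᴴ ⊗ₖ Bᴴ := by
  ext ⟨i, j⟩ ⟨i', j'⟩
  simp [Matrix.conjTranspose_apply, Matrix.kroneckerMap_apply]

/-- **Operator-Schmidt bound on overlap with product unitaries.**
If `U` on `ℂ^{d_A} ⊗ ℂ^{d_B}` has operator-Schmidt decomposition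
`U[(a,b),(a',b')] = ∑ₖ √pₖ ξₖ(a,a') φₖ(b,b')` with `pₖ ≥ 0` and `(ξₖ)`, `(φₖ)`
orthonormal families (Hilbert–Schmidt inner product), then for all unitaries `U_A`, `U_B`,
`|Tr[(U_A ⊗ U_B)† U]|² ≤ d_A d_B maxₖ pₖ`. -/
theorem schmidt_bound_product_overlap (dA dB : ℕ) (hA : 1 ≤ dA) (hB : 1 ≤ dB)
    (U : Matrix (Fin dA × Fin dB) (Fin dA × Fin dB) ℂ)
    (ι : Type) [Fintype ι] [DecidableEq ι] (p : ι → ℝ) (hp : ∀ k, 0 ≤ p k)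
    (ξ : ι → Matrix (Fin dA) (Fin dA) ℂ) (φ : ι → Matrix (Fin dB) (Fin dB) ℂ)
    (hξ : ∀ k l, (∑ a, ∑ a', (starRingEnd ℂ) (ξ k a a') * ξ l a a')
      = if k = l then 1 else 0)
    (hφ : ∀ k l, (∑ b, ∑ b', (starRingEnd ℂ) (φ k b b') * φ l b b')
      = if k = l then 1 else 0)
    (hU : ∀ a b a' b', U (a, b) (a', b')
      = ∑ k, (Real.sqrt (p k) : ℂ) * ξ k a a' * φ k b b')
    (UA : Matrix.unitaryGroup (Fin dA) ℂ) (UB : Matrix.unitaryGroup (Fin dB) ℂ) :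
    ‖((UA.1 ⊗ₖ UB.1)ᴴ * U).trace‖ ^ 2 ≤ (dA : ℝ) * (dB : ℝ) * ⨆ k, p k := by
  classical
  set x : ι → ℂ := fun k => ∑ a, ∑ a', (starRingEnd ℂ) (UA.1 a a') * ξ k a a' with hx
  set y : ι → ℂ := fun k => ∑ b, ∑ b', (starRingEnd ℂ) (UB.1 b b') * φ k b b' with hy
  -- U as a sum of Kronecker products
  have hUsum : U = ∑ k, (Real.sqrt (p k) : ℂ) • (ξ k ⊗ₖ φ k) := by
    ext ⟨a, b⟩ ⟨a', b'⟩
    rw [hU a b a' b']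
    simp [Matrix.sum_apply, Matrix.kroneckerMap_apply, mul_assoc]
  -- trace identity
  have htr : ((UA.1 ⊗ₖ UB.1)ᴴ * U).trace
      = ∑ k, (Real.sqrt (p k) : ℂ) * x k * y k := by
    rw [hUsum, Matrix.mul_sum, Matrix.trace_sum]
    apply Finset.sum_congr rfl
    intro k _
    rw [Matrix.mul_smul, Matrix.trace_smul, kron_conjT, ← Matrix.mul_kronecker_mul,
      Matrix.trace_kronecker]
    have h1 : (UA.1ᴴ * ξ k).trace = x k := by
      simp only [hx]
      rw [Finset.sum_comm]
      simp [Matrix.trace, Matrix.mul_apply, Matrix.conjTranspose_apply]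
    have h2 : (UB.1ᴴ * φ k).trace = y k := by
      simp only [hy]
      rw [Finset.sum_comm]
      simp [Matrix.trace, Matrix.mul_apply, Matrix.conjTranspose_apply]
    rw [h1, h2]
    simp [smul_eq_mul, mul_assoc]
  cases isEmpty_or_nonempty ι with
  | inl h =>
    rw [htr]
    simp [Real.iSup_of_isEmpty]
  | inr h =>
    set M : ℝ := ⨆ k, p k with hM
    have hple : ∀ k, p k ≤ M := fun k => le_ciSup (Set.Finite.bddAbove (Set.finite_range p)) k
    have hM0 : 0 ≤ M := le_trans (hp (Classical.arbitrary ι)) (hple _)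
    -- Bessel bounds
    have hbx : ∑ k, ‖x k‖ ^ 2 ≤ (dA : ℝ) := bessel_aux ξ hξ UA
    have hby : ∑ k, ‖y k‖ ^ 2 ≤ (dB : ℝ) := bessel_aux φ hφ UB
    -- abs bound
    have habs : ‖((UA.1 ⊗ₖ UB.1)ᴴ * U).trace‖
        ≤ Real.sqrt M * ∑ k, ‖x k‖ * ‖y k‖ := by
      rw [htr]
      calc ‖∑ k, (Real.sqrt (p k) : ℂ) * x k * y k‖
          ≤ ∑ k, ‖(Real.sqrt (p k) : ℂ) * x k * y k‖ := by
            simpa using norm_sum_le Finset.univ (fun k => (Real.sqrt (p k) : ℂ) * x k * y k)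
        _ = ∑ k, Real.sqrt (p k) * (‖x k‖ * ‖y k‖) := by
            apply Finset.sum_congr rfl
            intro k _
            simp [norm_mul, Complex.norm_real,
              abs_of_nonneg (Real.sqrt_nonneg (p k)), mul_assoc]
        _ ≤ ∑ k, Real.sqrt M * (‖x k‖ * ‖y k‖) := by
            apply Finset.sum_le_sum
            intro k _
            apply mul_le_mul_of_nonneg_right (Real.sqrt_le_sqrt (hple k))
            positivity
        _ = Real.sqrt M * ∑ k, ‖x k‖ * ‖y k‖ := by
            rw [Finset.mul_sum]
    have habs0 : (0:ℝ) ≤ Real.sqrt M * ∑ k, ‖x k‖ * ‖y k‖ := by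
      positivity
    calc ‖((UA.1 ⊗ₖ UB.1)ᴴ * U).trace‖ ^ 2
        ≤ (Real.sqrt M * ∑ k, ‖x k‖ * ‖y k‖) ^ 2 := by
          apply pow_le_pow_left₀ (norm_nonneg _) habs
      _ = M * (∑ k, ‖x k‖ * ‖y k‖) ^ 2 := by
          rw [mul_pow, Real.sq_sqrt hM0]
      _ ≤ M * ((∑ k, ‖x k‖ ^ 2) * ∑ k, ‖y k‖ ^ 2) := by
          apply mul_le_mul_of_nonneg_left (Finset.sum_mul_sq_le_sq_mul_sq _ _ _) hM0
      _ ≤ M * ((dA : ℝ) * (dB : ℝ)) := by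
          apply mul_le_mul_of_nonneg_left _ hM0
          apply mul_le_mul hbx hby (Finset.sum_nonneg fun k _ => sq_nonneg _)
            (Nat.cast_nonneg _)
      _ = (dA : ℝ) * (dB : ℝ) * M := by ring
end
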